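/- arXiv:2602.01802 — 2 statements merged into one kernel-verified Lean document; each statement's English description precedes it below -/
import Mathlib

section
/- Let Φ be an H-hardcore point set in ℝ², x₀ ∈ Φ with ‖x₀‖ = d, such that all points of Φ \ {x₀} lie at distance ≥ d from the origin (nearest-point association). Let t = max(d, 2H−d) and suppose the counting function satisfies Φ(b(o,R) \ E) ≤ G(R) := (2π/(√12 H))R + (π/(√12 H²))R², where E = b(o,d) ∪ b(x₀,2H). Then for all R ≥ t, the sum of ℓ(‖x‖) over x ∈ Φ ∩ b(o,R), x ≠ x₀, is at most ∫_t^R (2π ℓ(r)/√12)·(1/H + r/H²) dr + (π ℓ(t) t/√12)·(2/H + t/H²), for any non-negative, non-increasing, differentiable ℓ. -/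
open MeasureTheory

set_option maxHeartbeats 2000000 in
/-- Improved interference bound (Corollary 2): for an `H`-hardcore point set with
serving point `x₀` at distance `d` (nearest-point association), with
`t = max(d, 2H − d)` and counting function dominated by `G(R) = ρ_H R + ν_H R²`
outside the exclusion region `E = b(o,d) ∪ b(x₀, 2H)`, the accumulated interference
within radius `R ≥ t` is bounded by
`∫_t^R (2π ℓ(r)/√12)(1/H + r/H²) dr + (π ℓ(t) t/√12)(2/H + t/H²)`. -/
theorem stmt_4 (H d : ℝ) (hH : 0 < H) (hd : 0 < d)
    (Φ : Set (EuclideanSpace ℝ (Fin 2)))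
    (hhc : ∀ x ∈ Φ, ∀ y ∈ Φ, x ≠ y → 2 * H ≤ dist x y)
    (x₀ : EuclideanSpace ℝ (Fin 2)) (hx₀ : x₀ ∈ Φ) (hnorm : ‖x₀‖ = d)
    (hassoc : ∀ x ∈ Φ, x ≠ x₀ → d ≤ ‖x‖)
    (ℓ ℓ' : ℝ → ℝ)
    (hnn : ∀ r, 0 ≤ r → 0 ≤ ℓ r)
    (hanti : AntitoneOn ℓ (Set.Ici 0))
    (hderiv : ∀ r ∈ Set.Ici (0 : ℝ), HasDerivAt ℓ (ℓ' r) r)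
    (t : ℝ) (ht : t = max d (2 * H - d))
    (hcount : ∀ R : ℝ, 0 ≤ R →
      (((Φ ∩ Metric.ball (0 : EuclideanSpace ℝ (Fin 2)) R) \
          (Metric.ball (0 : EuclideanSpace ℝ (Fin 2)) d ∪ Metric.ball x₀ (2 * H))).ncard : ℝ)
        ≤ (2 * Real.pi / (Real.sqrt 12 * H)) * R
            + (Real.pi / (Real.sqrt 12 * H ^ 2)) * R ^ 2)
    (R : ℝ) (hR : t ≤ R)
    (hfin : ((Φ ∩ Metric.ball (0 : EuclideanSpace ℝ (Fin 2)) R) \ {x₀}).Finite) :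
    ∑ x ∈ hfin.toFinset, ℓ ‖x‖ ≤
      (∫ r in t..R, (2 * Real.pi * ℓ r / Real.sqrt 12) * (1 / H + r / H ^ 2))
        + (Real.pi * ℓ t * t / Real.sqrt 12) * (2 / H + t / H ^ 2) := by
  have ht0 : 0 < t := lt_of_lt_of_le hd (ht ▸ le_max_left _ _)
  have hR0 : 0 < R := lt_of_lt_of_le ht0 hR
  set ρ : ℝ := 2 * Real.pi / (Real.sqrt 12 * H) with hρ
  set ν : ℝ := Real.pi / (Real.sqrt 12 * H ^ 2) with hν
  set F := hfin.toFinset with hF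
  -- facts about members of F
  have hmem : ∀ x ∈ F, x ∈ Φ ∧ x ≠ x₀ ∧ t ≤ ‖x‖ ∧ ‖x‖ < R := by
    intro x hx
    rw [hF, Set.Finite.mem_toFinset] at hx
    obtain ⟨⟨hxΦ, hxb⟩, hxne⟩ := hx
    have hxne' : x ≠ x₀ := hxne
    have h1 : d ≤ ‖x‖ := hassoc x hxΦ hxne'
    have h2 : 2 * H ≤ dist x x₀ := hhc x hxΦ x₀ hx₀ hxne'
    have h3 : dist x x₀ ≤ ‖x‖ + ‖x₀‖ := by
      simpa [dist_eq_norm] using norm_sub_le x x₀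
    have h4 : 2 * H - d ≤ ‖x‖ := by rw [← hnorm]; linarith
    have h5 : ‖x‖ < R := by
      have := Metric.mem_ball.1 hxb
      rwa [dist_zero_right] at this
    exact ⟨hxΦ, hxne', by rw [ht]; exact max_le h1 h4, h5⟩
  -- the set identity F = S(R)
  have hFset : (F : Set (EuclideanSpace ℝ (Fin 2)))
      = (Φ ∩ Metric.ball (0 : EuclideanSpace ℝ (Fin 2)) R) \
        (Metric.ball (0 : EuclideanSpace ℝ (Fin 2)) d ∪ Metric.ball x₀ (2 * H)) := by
    rw [hF, Set.Finite.coe_toFinset]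
    ext x
    constructor
    · rintro ⟨⟨hxΦ, hxb⟩, hxne⟩
      have hxne' : x ≠ x₀ := hxne
      refine ⟨⟨hxΦ, hxb⟩, ?_⟩
      rintro (h | h)
      · have := Metric.mem_ball.1 h
        rw [dist_zero_right] at this
        exact absurd this (not_lt.2 (hassoc x hxΦ hxne'))
      · exact absurd (Metric.mem_ball.1 h) (not_lt.2 (hhc x hxΦ x₀ hx₀ hxne'))
    · rintro ⟨⟨hxΦ, hxb⟩, hxE⟩
      refine ⟨⟨hxΦ, hxb⟩, ?_⟩
      intro hx
      simp only [Set.mem_singleton_iff] at hx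
      subst hx
      exact hxE (Or.inr (Metric.mem_ball.2 (by rw [dist_self]; linarith)))
  -- counting bound via hcount for radii slightly above r
  have hcard : ∀ r' : ℝ, r' ≤ R → ∀ r : ℝ, 0 ≤ r → r < r' →
      ((F.filter (fun x => ‖x‖ ≤ r)).card : ℝ) ≤ ρ * r' + ν * r' ^ 2 := by
    intro r' hr'R r hr0 hrr'
    set S := (Φ ∩ Metric.ball (0 : EuclideanSpace ℝ (Fin 2)) r') \
      (Metric.ball (0 : EuclideanSpace ℝ (Fin 2)) d ∪ Metric.ball x₀ (2 * H)) with hS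
    have hsub : ↑(F.filter (fun x => ‖x‖ ≤ r)) ⊆ S := by
      intro x hx
      simp only [Finset.coe_filter, Set.mem_setOf_eq] at hx
      obtain ⟨hxF, hxr⟩ := hx
      have hx' : x ∈ (F : Set (EuclideanSpace ℝ (Fin 2))) := hxF
      rw [hFset] at hx'
      obtain ⟨⟨hxΦ, _⟩, hxE⟩ := hx'
      exact ⟨⟨hxΦ, Metric.mem_ball.2 (by rw [dist_zero_right]; exact lt_of_le_of_lt hxr hrr')⟩, hxE⟩
    have hSsub : S ⊆ (F : Set (EuclideanSpace ℝ (Fin 2))) := by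
      rw [hFset]
      rintro y ⟨⟨hyΦ, hyb⟩, hyE⟩
      exact ⟨⟨hyΦ, Metric.mem_ball.2 (lt_of_lt_of_le (Metric.mem_ball.1 hyb) hr'R)⟩, hyE⟩
    have hSfin : S.Finite := F.finite_toSet.subset hSsub
    calc ((F.filter (fun x => ‖x‖ ≤ r)).card : ℝ)
        = ((↑(F.filter (fun x => ‖x‖ ≤ r)) : Set (EuclideanSpace ℝ (Fin 2))).ncard : ℝ) := by
          rw [Set.ncard_coe_finset]
      _ ≤ (S.ncard : ℝ) := Nat.cast_le.2 (Set.ncard_le_ncard hsub hSfin)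
      _ ≤ ρ * r' + ν * r' ^ 2 := hcount r' (le_trans hr0 hrr'.le)
  have hcardF : (F.card : ℝ) ≤ ρ * R + ν * R ^ 2 := by
    have h1 : (F.card : ℝ) = (((F : Set (EuclideanSpace ℝ (Fin 2)))).ncard : ℝ) := by
      rw [Set.ncard_coe_finset]
    rw [h1, hFset]
    exact hcount R hR0.le
  -- pointwise counting bound at radius r itself (limit argument)
  have hN : ∀ r ∈ Set.Icc t R, ((F.filter (fun x => ‖x‖ ≤ r)).card : ℝ) ≤ ρ * r + ν * r ^ 2 := by
    intro r hr
    rcases lt_or_eq_of_le hr.2 with hrR | hrR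
    · have htend : Filter.Tendsto (fun r' : ℝ => ρ * r' + ν * r' ^ 2)
          (nhdsWithin r (Set.Ioi r)) (nhds (ρ * r + ν * r ^ 2)) :=
        (Continuous.tendsto ((continuous_const.mul continuous_id).add (continuous_const.mul (continuous_pow 2))) r).mono_left nhdsWithin_le_nhds
      refine ge_of_tendsto htend ?_
      filter_upwards [Ioo_mem_nhdsGT_of_mem ⟨le_refl r, hrR⟩] with r' hr'
      exact hcard r' hr'.2.le r (le_trans ht0.le hr.1) hr'.1
    · rw [hrR]
      exact le_trans (Nat.cast_le.2 (Finset.card_filter_le _ _)) hcardF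
  -- derivative is nonpositive
  have hl'nonpos : ∀ r : ℝ, 0 < r → ℓ' r ≤ 0 := by
    intro r hr
    have h := hasDerivAt_iff_tendsto_slope.1 (hderiv r hr.le)
    have h2 : Filter.Tendsto (slope ℓ r) (nhdsWithin r (Set.Ioi r)) (nhds (ℓ' r)) :=
      h.mono_left (nhdsWithin_mono r fun y hy => ne_of_gt hy)
    refine le_of_tendsto h2 ?_
    filter_upwards [self_mem_nhdsWithin] with y hy
    have hy' : r < y := hy
    have hle : ℓ y ≤ ℓ r := hanti hr.le (le_trans hr.le hy'.le) hy'.le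
    rw [slope_def_field]
    exact div_nonpos_iff.2 (Or.inr ⟨by linarith, by linarith⟩)
  -- integrability of ℓ'
  have hl'int : IntervalIntegrable ℓ' volume t R := by
    have hcont : ContinuousOn (fun r => -ℓ r) (Set.Icc t R) := fun r hr =>
      ((hderiv r (le_trans ht0.le hr.1)).continuousAt.neg).continuousWithinAt
    have hder : ∀ r ∈ Set.Ioo t R, HasDerivAt (fun r => -ℓ r) (-ℓ' r) r :=
      fun r hr => (hderiv r (le_trans ht0.le hr.1.le)).neg
    have hpos : ∀ r ∈ Set.Ioo t R, 0 ≤ -ℓ' r :=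
      fun r hr => neg_nonneg.2 (hl'nonpos r (lt_trans ht0 hr.1))
    have h1 := intervalIntegral.integrableOn_deriv_of_nonneg hcont hder hpos
    have h2 : IntegrableOn ℓ' (Set.Ioc t R) volume := by
      have h3 : IntegrableOn (fun r => -(-ℓ' r)) (Set.Ioc t R) volume := h1.neg
      simpa only [neg_neg] using h3
    exact (intervalIntegrable_iff_integrableOn_Ioc_of_le hR).2 h2
  -- indicator integrability
  have hind : ∀ a : ℝ, IntervalIntegrable ((Set.Ici a).indicator ℓ') volume t R := by
    intro a
    have h1 := (intervalIntegrable_iff_integrableOn_Ioc_of_le hR).1 hl'int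
    exact (intervalIntegrable_iff_integrableOn_Ioc_of_le hR).2 (h1.indicator measurableSet_Ici)
  -- FTC per point
  have hFTC : ∀ x ∈ F, ℓ ‖x‖ = ℓ R - ∫ r in t..R, (Set.Ici ‖x‖).indicator ℓ' r := by
    intro x hx
    obtain ⟨_, _, hxa, hxR⟩ := hmem x hx
    set a := ‖x‖ with ha
    have ha0 : 0 < a := lt_of_lt_of_le ht0 hxa
    have hsub1 : Set.uIcc a R ⊆ Set.uIcc t R := by
      rw [Set.uIcc_of_le hxR.le, Set.uIcc_of_le hR]
      exact Set.Icc_subset_Icc hxa le_rfl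
    have hsub2 : Set.uIcc t a ⊆ Set.uIcc t R := by
      rw [Set.uIcc_of_le hxa, Set.uIcc_of_le hR]
      exact Set.Icc_subset_Icc le_rfl hxR.le
    have hftc : ∫ r in a..R, ℓ' r = ℓ R - ℓ a :=
      intervalIntegral.integral_eq_sub_of_hasDerivAt
        (fun r hr => hderiv r (by
          rw [Set.uIcc_of_le hxR.le] at hr
          exact le_trans ha0.le hr.1)) (hl'int.mono_set hsub1)
    have hsplit := intervalIntegral.integral_add_adjacent_intervals
      ((hind a).mono_set hsub2) ((hind a).mono_set hsub1)
    have h1 : (∫ r in t..a, (Set.Ici a).indicator ℓ' r) = 0 := by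
      have hae : ∀ᵐ r : ℝ, r ≠ a := by
        refine MeasureTheory.ae_iff.2 ?_
        simpa using Real.volume_singleton (a := a)
      have heq : (∫ r in t..a, (Set.Ici a).indicator ℓ' r) = ∫ r in t..a, (0 : ℝ) := by
        apply intervalIntegral.integral_congr_ae
        filter_upwards [hae] with r hr hmem'
        rw [Set.uIoc_of_le hxa] at hmem'
        have hlt : r < a := lt_of_le_of_ne hmem'.2 hr
        simp [Set.indicator_apply, not_le.2 hlt]
      simpa using heq
    have h2 : (∫ r in a..R, (Set.Ici a).indicator ℓ' r) = ℓ R - ℓ a := by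
      rw [← hftc]
      apply intervalIntegral.integral_congr
      intro r hr
      rw [Set.uIcc_of_le hxR.le] at hr
      exact Set.indicator_of_mem hr.1 ℓ'
    rw [← hsplit, h1, h2]
    ring
  -- sum formula
  have hsum : ∑ x ∈ F, ℓ ‖x‖
      = (F.card : ℝ) * ℓ R - ∫ r in t..R, ∑ x ∈ F, (Set.Ici ‖x‖).indicator ℓ' r := by
    rw [intervalIntegral.integral_finset_sum (fun x _ => hind ‖x‖)]
    rw [Finset.sum_congr rfl hFTC, Finset.sum_sub_distrib, Finset.sum_const, nsmul_eq_mul]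
  -- pointwise integrand inequality
  have hptwise : ∀ r ∈ Set.Icc t R,
      (ρ * r + ν * r ^ 2) * ℓ' r ≤ ∑ x ∈ F, (Set.Ici ‖x‖).indicator ℓ' r := by
    intro r hr
    have hsum_eq : ∑ x ∈ F, (Set.Ici ‖x‖).indicator ℓ' r
        = ((F.filter (fun x => ‖x‖ ≤ r)).card : ℝ) * ℓ' r := by
      have h1 : ∀ x ∈ F, (Set.Ici ‖x‖).indicator ℓ' r = if ‖x‖ ≤ r then ℓ' r else 0 := by
        intro x _
        simp [Set.indicator_apply, Set.mem_Ici]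
      rw [Finset.sum_congr rfl h1, ← Finset.sum_filter, Finset.sum_const, nsmul_eq_mul]
    rw [hsum_eq]
    exact mul_le_mul_of_nonpos_right (hN r hr) (hl'nonpos r (lt_of_lt_of_le ht0 hr.1))
  -- integrability of the comparison functions
  have hGcont : ContinuousOn (fun r : ℝ => ρ * r + ν * r ^ 2) (Set.uIcc t R) := by
    exact Continuous.continuousOn ((continuous_const.mul continuous_id).add (continuous_const.mul (continuous_pow 2)))
  have hGl'int : IntervalIntegrable (fun r => (ρ * r + ν * r ^ 2) * ℓ' r) volume t R :=
    hl'int.continuousOn_mul hGcont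
  have hsumint : IntervalIntegrable (fun r => ∑ x ∈ F, (Set.Ici ‖x‖).indicator ℓ' r) volume t R := by
    have h := IntervalIntegrable.sum (μ := volume) (a := t) (b := R) F
      (f := fun x => (Set.Ici ‖x‖).indicator ℓ') (fun x _ => hind ‖x‖)
    have heq : (∑ x ∈ F, fun r => (Set.Ici ‖x‖).indicator ℓ' r)
        = (fun r => ∑ x ∈ F, (Set.Ici ‖x‖).indicator ℓ' r) := by
      funext r
      simp [Finset.sum_apply]
    rwa [heq] at h
  have hint_mono : (∫ r in t..R, (ρ * r + ν * r ^ 2) * ℓ' r)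
      ≤ ∫ r in t..R, ∑ x ∈ F, (Set.Ici ‖x‖).indicator ℓ' r :=
    intervalIntegral.integral_mono_on hR hGl'int hsumint hptwise
  -- integration by parts
  have hGderiv : ∀ r ∈ Set.uIcc t R,
      HasDerivAt (fun r : ℝ => ρ * r + ν * r ^ 2) (ρ + ν * (2 * r)) r := by
    intro r _
    have h1 : HasDerivAt (fun r : ℝ => ρ * r) (ρ * 1) r := (hasDerivAt_id r).const_mul ρ
    have h2 : HasDerivAt (fun r : ℝ => ν * r ^ 2) (ν * (2 * r ^ 1)) r :=
      (hasDerivAt_pow 2 r).const_mul ν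
    have := h1.add h2
    exact this.congr_deriv (by ring)
  have hparts : (∫ r in t..R, (ρ * r + ν * r ^ 2) * ℓ' r)
      = (ρ * R + ν * R ^ 2) * ℓ R - (ρ * t + ν * t ^ 2) * ℓ t
        - ∫ r in t..R, (ρ + ν * (2 * r)) * ℓ r :=
    intervalIntegral.integral_mul_deriv_eq_deriv_mul hGderiv
      (fun r hr => hderiv r (by
        rw [Set.uIcc_of_le hR] at hr
        exact le_trans ht0.le hr.1))
      ((Continuous.continuousOn (continuous_const.add (continuous_const.mul (continuous_const.mul continuous_id)))).intervalIntegrable)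
      hl'int
  -- final assembly
  have hlR : 0 ≤ ℓ R := hnn R hR0.le
  have hmain : ∑ x ∈ F, ℓ ‖x‖
      ≤ (ρ * t + ν * t ^ 2) * ℓ t + ∫ r in t..R, (ρ + ν * (2 * r)) * ℓ r := by
    rw [hsum]
    have h1 : (F.card : ℝ) * ℓ R ≤ (ρ * R + ν * R ^ 2) * ℓ R :=
      mul_le_mul_of_nonneg_right hcardF hlR
    have h2 := hint_mono
    rw [hparts] at h2
    linarith
  refine le_trans hmain ?_
  have hint_eq : (∫ r in t..R, (ρ + ν * (2 * r)) * ℓ r)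
      = ∫ r in t..R, (2 * Real.pi * ℓ r / Real.sqrt 12) * (1 / H + r / H ^ 2) := by
    apply intervalIntegral.integral_congr
    intro r _
    rw [hρ, hν]
    ring
  have hbdy_eq : (ρ * t + ν * t ^ 2) * ℓ t
      = (Real.pi * ℓ t * t / Real.sqrt 12) * (2 / H + t / H ^ 2) := by
    rw [hρ, hν]
    ring
  rw [hint_eq, hbdy_eq]
  linarith
end

section
/- Define θ(P,H) = P·ℓ(d) / (P·I(H) + W) where I(H) = ∫_t^∞ (2π ℓ(r)/√12)(1/H + r/H²) dr + (π ℓ(t) t/√12)(2/H + t/H²), with ℓ(r) = min(1,r^{-α}), α > 2, t = max(d, 2H−d), and fixed P, W, d > 0. Then H ↦ θ(P,H) is strictly increasing on (d, ∞) and θ(P,H) → P·ℓ(d)/W as H → ∞. -/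
open MeasureTheory

/-- Power-law path loss. -/
noncomputable def lpath (α r : ℝ) : ℝ := min 1 (r ^ (-α))

/-- Effective exclusion radius `t = max(d, 2H − d)`. -/
noncomputable def texc (d H : ℝ) : ℝ := max d (2 * H - d)

/-- Interference upper bound `I(H)`. -/
noncomputable def Ibound (α d H : ℝ) : ℝ :=
  (∫ r in Set.Ioi (texc d H), (2 * Real.pi * lpath α r / Real.sqrt 12) * (1 / H + r / H ^ 2))
    + (Real.pi * lpath α (texc d H) * texc d H / Real.sqrt 12) * (2 / H + texc d H / H ^ 2)

/-- Guaranteed SINR lower bound `θ(P,H)`. -/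
noncomputable def theta (α d W P H : ℝ) : ℝ := P * lpath α d / (P * Ibound α d H + W)

lemma lpath_pos {α t : ℝ} (ht : 0 < t) : 0 < lpath α t :=
  lt_min one_pos (Real.rpow_pos_of_pos ht _)

lemma lpath_nonneg {α t : ℝ} (ht : 0 < t) : 0 ≤ lpath α t := (lpath_pos ht).le

lemma lpath_anti {α : ℝ} (hα : 0 < α) {s t : ℝ} (hs : 0 < s) (hst : s ≤ t) :
    lpath α t ≤ lpath α s :=
  min_le_min le_rfl (Real.rpow_le_rpow_of_nonpos hs hst (by linarith))

lemma lpath_contOn (α : ℝ) : ContinuousOn (lpath α) (Set.Ioi 0) := by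
  have h : ContinuousOn (fun r : ℝ => r ^ (-α)) (Set.Ioi 0) := fun x hx =>
    (Real.continuousAt_rpow_const x (-α) (Or.inl (ne_of_gt hx))).continuousWithinAt
  exact continuous_min.comp_continuousOn (continuousOn_const.prodMk h)

lemma lpath_le_rpow {α r : ℝ} : lpath α r ≤ r ^ (-α) := min_le_right _ _

lemma integrableOn_lpath {α : ℝ} (hα : 2 < α) {t : ℝ} (ht : 0 < t) :
    IntegrableOn (lpath α) (Set.Ioi t) := by
  refine Integrable.mono' (integrableOn_Ioi_rpow_of_lt (by linarith : -α < -1) ht)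
    (((lpath_contOn α).mono (Set.Ioi_subset_Ioi ht.le)).aestronglyMeasurable measurableSet_Ioi) ?_
  filter_upwards [ae_restrict_mem measurableSet_Ioi] with r hr
  rw [Real.norm_eq_abs, abs_of_nonneg (lpath_nonneg (ht.trans hr))]
  exact lpath_le_rpow

lemma integrableOn_mul_lpath {α : ℝ} (hα : 2 < α) {t : ℝ} (ht : 0 < t) :
    IntegrableOn (fun r => r * lpath α r) (Set.Ioi t) := by
  refine Integrable.mono' (integrableOn_Ioi_rpow_of_lt (by linarith : 1 - α < -1) ht)
    ((continuousOn_id.mul ((lpath_contOn α).mono (Set.Ioi_subset_Ioi ht.le))).aestronglyMeasurable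
      measurableSet_Ioi) ?_
  filter_upwards [ae_restrict_mem measurableSet_Ioi] with r hr
  have hr0 : 0 < r := ht.trans hr
  rw [Real.norm_eq_abs, abs_of_nonneg (mul_nonneg hr0.le (lpath_nonneg hr0))]
  calc r * lpath α r ≤ r * r ^ (-α) := mul_le_mul_of_nonneg_left lpath_le_rpow hr0.le
    _ = r ^ (1 - α) := by rw [sub_eq_add_neg, Real.rpow_add hr0, Real.rpow_one]

noncomputable def Aint (α t : ℝ) : ℝ := (∫ r in Set.Ioi t, lpath α r) + lpath α t * t

noncomputable def Bint (α t : ℝ) : ℝ :=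
  (∫ r in Set.Ioi t, r * lpath α r) + lpath α t * t ^ 2 / 2

lemma Aint_pos {α : ℝ} (hα : 2 < α) {t : ℝ} (ht : 0 < t) : 0 < Aint α t := by
  have h1 : 0 ≤ ∫ r in Set.Ioi t, lpath α r :=
    setIntegral_nonneg measurableSet_Ioi fun r hr => lpath_nonneg (ht.trans hr)
  have h2 : 0 < lpath α t * t := mul_pos (lpath_pos ht) ht
  unfold Aint; linarith

lemma Bint_pos {α : ℝ} (hα : 2 < α) {t : ℝ} (ht : 0 < t) : 0 < Bint α t := by
  have h1 : 0 ≤ ∫ r in Set.Ioi t, r * lpath α r :=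
    setIntegral_nonneg measurableSet_Ioi fun r hr =>
      mul_nonneg (ht.trans hr).le (lpath_nonneg (ht.trans hr))
  have h2 : 0 < lpath α t * t ^ 2 / 2 := by have := lpath_pos (α := α) ht; positivity
  unfold Bint; linarith

lemma Aint_anti {α : ℝ} (hα : 2 < α) {s t : ℝ} (hs : 0 < s) (hst : s ≤ t) :
    Aint α t ≤ Aint α s := by
  have ht : 0 < t := hs.trans_le hst
  have hint := integrableOn_lpath hα hs
  have hsplit : (∫ r in Set.Ioi s, lpath α r)
      = (∫ r in Set.Ioc s t, lpath α r) + ∫ r in Set.Ioi t, lpath α r := by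
    rw [← setIntegral_union (Set.Ioc_disjoint_Ioi le_rfl) measurableSet_Ioi
      (hint.mono_set Set.Ioc_subset_Ioi_self) (hint.mono_set (Set.Ioi_subset_Ioi hst)),
      Set.Ioc_union_Ioi_eq_Ioi hst]
  have hlow : lpath α t * (t - s) ≤ ∫ r in Set.Ioc s t, lpath α r := by
    have h := setIntegral_mono_on (f := fun _ => lpath α t) (g := lpath α)
      (s := Set.Ioc s t)
      (integrableOn_const measure_Ioc_lt_top.ne)
      (hint.mono_set Set.Ioc_subset_Ioi_self) measurableSet_Ioc
      (fun r hr => lpath_anti (by linarith : (0:ℝ) < α) (hs.trans hr.1) hr.2)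
    simpa [Real.volume_Ioc, ENNReal.toReal_ofReal (sub_nonneg.2 hst), max_eq_left (sub_nonneg.2 hst), smul_eq_mul,
      mul_comm] using h
  have hmono := lpath_anti (by linarith : (0:ℝ) < α) hs hst
  unfold Aint
  rw [hsplit]
  nlinarith [mul_nonneg hs.le (sub_nonneg.2 hmono)]

lemma Bint_anti {α : ℝ} (hα : 2 < α) {s t : ℝ} (hs : 0 < s) (hst : s ≤ t) :
    Bint α t ≤ Bint α s := by
  have ht : 0 < t := hs.trans_le hst
  have hint := integrableOn_mul_lpath hα hs
  have hsplit : (∫ r in Set.Ioi s, r * lpath α r)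
      = (∫ r in Set.Ioc s t, r * lpath α r) + ∫ r in Set.Ioi t, r * lpath α r := by
    rw [← setIntegral_union (Set.Ioc_disjoint_Ioi le_rfl) measurableSet_Ioi
      (hint.mono_set Set.Ioc_subset_Ioi_self) (hint.mono_set (Set.Ioi_subset_Ioi hst)),
      Set.Ioc_union_Ioi_eq_Ioi hst]
  have hid : (∫ r in Set.Ioc s t, r) = (t ^ 2 - s ^ 2) / 2 := by
    rw [← intervalIntegral.integral_of_le hst, integral_id]
  have hconst : IntegrableOn (fun r : ℝ => lpath α t * r) (Set.Ioc s t) := by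
    apply Continuous.integrableOn_Ioc
    exact continuous_const.mul continuous_id
  have hptwise : ∀ r ∈ Set.Ioc s t, lpath α t * r ≤ r * lpath α r := by
    intro r hr
    have hr0 : 0 < r := hs.trans hr.1
    have h := lpath_anti (by linarith : (0:ℝ) < α) hr0 hr.2
    calc lpath α t * r ≤ lpath α r * r := mul_le_mul_of_nonneg_right h hr0.le
      _ = r * lpath α r := mul_comm _ _
  have hlow : lpath α t * ((t ^ 2 - s ^ 2) / 2) ≤ ∫ r in Set.Ioc s t, r * lpath α r := by
    have h := setIntegral_mono_on hconst
      (hint.mono_set Set.Ioc_subset_Ioi_self) measurableSet_Ioc hptwise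
    rwa [MeasureTheory.integral_const_mul, hid] at h
  have hmono := lpath_anti (by linarith : (0:ℝ) < α) hs hst
  unfold Bint
  rw [hsplit]
  nlinarith [mul_nonneg (sq_nonneg s) (sub_nonneg.2 hmono)]

lemma texc_pos {d H : ℝ} (hd : 0 < d) : 0 < texc d H :=
  lt_of_lt_of_le hd (le_max_left _ _)

lemma Ibound_eq {α d H : ℝ} (hα : 2 < α) (hd : 0 < d) (hH : 0 < H) :
    Ibound α d H = (2 * Real.pi / Real.sqrt 12) *
      (Aint α (texc d H) / H + Bint α (texc d H) / H ^ 2) := by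
  have ht : 0 < texc d H := texc_pos hd
  have h1 := integrableOn_lpath hα ht
  have h2 := integrableOn_mul_lpath hα ht
  have h12 : (0:ℝ) < Real.sqrt 12 := Real.sqrt_pos.2 (by norm_num)
  unfold Ibound Aint Bint
  have hfun : ∀ r : ℝ, (2 * Real.pi * lpath α r / Real.sqrt 12) * (1 / H + r / H ^ 2)
      = (2 * Real.pi / (Real.sqrt 12 * H)) * lpath α r
        + (2 * Real.pi / (Real.sqrt 12 * H ^ 2)) * (r * lpath α r) := by
    intro r; field_simp
  simp_rw [hfun]
  rw [integral_add (h1.const_mul _) (h2.const_mul _),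
    MeasureTheory.integral_const_mul, MeasureTheory.integral_const_mul]
  field_simp
  ring

lemma Ibound_pos {α d H : ℝ} (hα : 2 < α) (hd : 0 < d) (hH : 0 < H) :
    0 < Ibound α d H := by
  rw [Ibound_eq hα hd hH]
  have ht : 0 < texc d H := texc_pos hd
  have := Aint_pos hα ht
  have := Bint_pos hα ht
  have : (0:ℝ) < Real.sqrt 12 := Real.sqrt_pos.2 (by norm_num)
  have := Real.pi_pos
  positivity

lemma Ibound_strict_anti {α d : ℝ} (hα : 2 < α) (hd : 0 < d) {H₁ H₂ : ℝ}
    (h1 : d < H₁) (h2 : H₁ < H₂) : Ibound α d H₂ < Ibound α d H₁ := by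
  have hH1 : 0 < H₁ := hd.trans h1
  have hH2 : 0 < H₂ := hH1.trans h2
  have ht1 : texc d H₁ = 2 * H₁ - d := max_eq_right (by linarith)
  have ht2 : texc d H₂ = 2 * H₂ - d := max_eq_right (by linarith)
  have htd1 : 0 < texc d H₁ := texc_pos hd
  have htle : texc d H₁ ≤ texc d H₂ := by rw [ht1, ht2]; linarith
  have hA := Aint_anti hα htd1 htle
  have hB := Bint_anti hα htd1 htle
  have hA1 := Aint_pos hα htd1
  have hB1 := Bint_pos hα htd1
  rw [Ibound_eq hα hd hH1, Ibound_eq hα hd hH2]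
  have hC : (0:ℝ) < 2 * Real.pi / Real.sqrt 12 := by
    have : (0:ℝ) < Real.sqrt 12 := Real.sqrt_pos.2 (by norm_num)
    have := Real.pi_pos
    positivity
  have key : Aint α (texc d H₂) / H₂ + Bint α (texc d H₂) / H₂ ^ 2
      < Aint α (texc d H₁) / H₁ + Bint α (texc d H₁) / H₁ ^ 2 := by
    have e1 : Aint α (texc d H₂) / H₂ < Aint α (texc d H₁) / H₁ :=
      calc Aint α (texc d H₂) / H₂ ≤ Aint α (texc d H₁) / H₂ := by gcongr
        _ < Aint α (texc d H₁) / H₁ := div_lt_div_of_pos_left hA1 hH1 h2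
    have e2 : Bint α (texc d H₂) / H₂ ^ 2 < Bint α (texc d H₁) / H₁ ^ 2 :=
      calc Bint α (texc d H₂) / H₂ ^ 2 ≤ Bint α (texc d H₁) / H₂ ^ 2 := by gcongr
        _ < Bint α (texc d H₁) / H₁ ^ 2 :=
          div_lt_div_of_pos_left hB1 (by positivity) (by nlinarith)
    linarith
  exact mul_lt_mul_of_pos_left key hC

lemma Ibound_tendsto_zero {α d : ℝ} (hα : 2 < α) (hd : 0 < d) :
    Filter.Tendsto (Ibound α d) Filter.atTop (nhds 0) := by
  have hC : (0:ℝ) < 2 * Real.pi / Real.sqrt 12 := by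
    have : (0:ℝ) < Real.sqrt 12 := Real.sqrt_pos.2 (by norm_num)
    have := Real.pi_pos
    positivity
  have hup : Filter.Tendsto (fun H : ℝ => (2 * Real.pi / Real.sqrt 12) *
      (Aint α d * H⁻¹ + Bint α d * (H ^ 2)⁻¹)) Filter.atTop (nhds 0) := by
    have h1 : Filter.Tendsto (fun H : ℝ => H⁻¹) Filter.atTop (nhds 0) :=
      tendsto_inv_atTop_zero
    have h2 : Filter.Tendsto (fun H : ℝ => (H ^ 2)⁻¹) Filter.atTop (nhds 0) :=
      (Filter.tendsto_pow_atTop two_ne_zero).inv_tendsto_atTop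
    have := ((h1.const_mul (Aint α d)).add (h2.const_mul (Bint α d))).const_mul
      (2 * Real.pi / Real.sqrt 12)
    simpa using this
  refine tendsto_of_tendsto_of_tendsto_of_le_of_le' tendsto_const_nhds hup ?_ ?_
  · filter_upwards [Filter.eventually_gt_atTop d] with H hH
    exact (Ibound_pos hα hd (hd.trans hH)).le
  · filter_upwards [Filter.eventually_gt_atTop d] with H hH
    have hH0 : 0 < H := hd.trans hH
    rw [Ibound_eq hα hd hH0]
    have htd : d ≤ texc d H := le_max_left _ _
    have hA := Aint_anti hα hd htd
    have hB := Bint_anti hα hd htd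
    have hAp := (Aint_pos hα (texc_pos (H := H) hd)).le
    have hBp := (Bint_pos hα (texc_pos (H := H) hd)).le
    simp only [div_eq_mul_inv]
    gcongr

/-- `H ↦ θ(P,H)` is strictly increasing on `(d,∞)` and tends to the SNR `P·ℓ(d)/W`
as `H → ∞`. -/
theorem stmt_8 (α d W P : ℝ) (hα : 2 < α) (hd : 0 < d) (hW : 0 < W) (hP : 0 < P) :
    StrictMonoOn (theta α d W P) (Set.Ioi d) ∧
      Filter.Tendsto (theta α d W P) Filter.atTop (nhds (P * lpath α d / W)) := by
  constructor
  · intro H₁ h1 H₂ h2 h12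
    simp only [Set.mem_Ioi] at h1 h2
    have hI := Ibound_strict_anti hα hd h1 h12
    have hI1 : 0 < Ibound α d H₁ := Ibound_pos hα hd (hd.trans h1)
    have hI2 : 0 < Ibound α d H₂ := Ibound_pos hα hd (hd.trans h2)
    have hnum : 0 < P * lpath α d := mul_pos hP (lpath_pos hd)
    have hden2 : 0 < P * Ibound α d H₂ + W := by positivity
    have hlt : P * Ibound α d H₂ + W < P * Ibound α d H₁ + W := by
      have := mul_lt_mul_of_pos_left hI hP; linarith
    exact div_lt_div_of_pos_left hnum hden2 hlt
  · have hI0 := Ibound_tendsto_zero hα hd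
    have hden : Filter.Tendsto (fun H => P * Ibound α d H + W) Filter.atTop (nhds W) := by
      have := (hI0.const_mul P).add (tendsto_const_nhds (x := W))
      simpa using this
    have := (tendsto_const_nhds (x := P * lpath α d)).div hden hW.ne'
    exact this
end
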